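/- arXiv:2502.04006 — 2 statements merged into one kernel-verified Lean document; each statement's English description precedes it below -/
import Mathlib

section
/- Let K be a closed convex cone in ℝⁿ and F a face of K. Then CP(F) is an exposed face of CP(K). -/
open Matrix
open scoped Pointwise

noncomputable section

/-- Frobenius inner product on real `n × n` matrices:
`⟨A,B⟩ = ∑ᵢⱼ Aᵢⱼ Bᵢⱼ`. -/
def mip {n : ℕ} (A B : Matrix (Fin n) (Fin n) ℝ) : ℝ :=
  ∑ i, ∑ j, A i j * B i j

/-- `CPset S` (also used for `S₊(X)` when `S` is a subspace): the set of matrices of the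
form `∑ᵢ aᵢaᵢᵀ` for a positive number of vectors `aᵢ ∈ S`. -/
def CPset {n : ℕ} (S : Set (Fin n → ℝ)) : Set (Matrix (Fin n) (Fin n) ℝ) :=
  {A | ∃ k : ℕ, 0 < k ∧ ∃ f : Fin k → (Fin n → ℝ),
        (∀ i, f i ∈ S) ∧ A = ∑ i, Matrix.vecMulVec (f i) (f i)}

/-- `COPset K`: symmetric matrices `A` with `xᵀAx ≥ 0` for all `x ∈ K`. -/
def COPset {n : ℕ} (K : Set (Fin n → ℝ)) : Set (Matrix (Fin n) (Fin n) ℝ) :=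
  {A | A.IsSymm ∧ ∀ x ∈ K, 0 ≤ x ⬝ᵥ A.mulVec x}

/-- `F` is a face of the convex cone `C`: a nonempty convex subcone such that
`a, b ∈ C`, `a + b ∈ F` imply `a, b ∈ F`. -/
def IsFaceOf {M : Type*} [AddCommMonoid M] [Module ℝ M] (C F : Set M) : Prop :=
  F.Nonempty ∧ F ⊆ C ∧ Convex ℝ F ∧ (∀ x ∈ F, ∀ c : ℝ, 0 ≤ c → c • x ∈ F) ∧
    ∀ a ∈ C, ∀ b ∈ C, a + b ∈ F → a ∈ F ∧ b ∈ F

/-- Exposed face of a cone of matrices (w.r.t. the trace inner product). -/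
def IsExposedFaceOf {n : ℕ} (C F : Set (Matrix (Fin n) (Fin n) ℝ)) : Prop :=
  IsFaceOf C F ∧ ∃ H : Matrix (Fin n) (Fin n) ℝ,
    (∀ A ∈ C, 0 ≤ mip H A) ∧ F = {A ∈ C | mip H A = 0}

/-- Dimension of a set: dimension of its linear span. -/
def setDim {M : Type*} [AddCommGroup M] [Module ℝ M] (S : Set M) : ℕ :=
  Module.finrank ℝ (Submodule.span ℝ S)

/-- The ray `ℝ₊ • x`. -/
def rayOf {M : Type*} [AddCommMonoid M] [Module ℝ M] (x : M) : Set M :=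
  {y | ∃ c : ℝ, 0 ≤ c ∧ y = c • x}

/-- An extreme ray: a one-dimensional face. -/
def IsExtremeRayOf {M : Type*} [AddCommGroup M] [Module ℝ M] (C F : Set M) : Prop :=
  IsFaceOf C F ∧ setDim F = 1

/-- The second-order cone `L^{m+1} = {x : x₀ ≥ ‖(x₁,…,xₘ)‖}`. -/
def soc (m : ℕ) : Set (Fin (m+1) → ℝ) :=
  {x | Real.sqrt (∑ i : Fin m, x i.succ ^ 2) ≤ x 0}

/-- The boundary `∂L^{m+1} = {x : x₀ = ‖(x₁,…,xₘ)‖}`. -/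
def socBd (m : ℕ) : Set (Fin (m+1) → ℝ) :=
  {x | Real.sqrt (∑ i : Fin m, x i.succ ^ 2) = x 0}

/-- The interior `int L^{m+1} = {x : x₀ > ‖(x₁,…,xₘ)‖}`. -/
def socInt (m : ℕ) : Set (Fin (m+1) → ℝ) :=
  {x | Real.sqrt (∑ i : Fin m, x i.succ ^ 2) < x 0}

/-- The matrix `J = diag(1, −1, …, −1)`. -/
def Jmat (m : ℕ) : Matrix (Fin (m+1)) (Fin (m+1)) ℝ :=
  Matrix.diagonal fun i => if i = 0 then 1 else -1

/-- The hyperplane `{x : x ⬝ u = 0}` as a submodule. -/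
def perpHyp {n : ℕ} (u : Fin n → ℝ) : Submodule ℝ (Fin n → ℝ) where
  carrier := {x | x ⬝ᵥ u = 0}
  add_mem' := by
    intro a b ha hb
    simp only [Set.mem_setOf_eq, add_dotProduct] at *
    linarith
  zero_mem' := by simp [zero_dotProduct]
  smul_mem' := by
    intro c a ha
    simp only [Set.mem_setOf_eq, smul_dotProduct] at *
    simp [ha]

/-- A polyhedral cone: nonnegative combinations of finitely many vectors. -/
def IsPolyhedralCone {M : Type*} [AddCommMonoid M] [Module ℝ M] (S : Set M) : Prop :=
  ∃ (k : ℕ) (g : Fin k → M),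
    S = {x | ∃ c : Fin k → ℝ, (∀ i, 0 ≤ c i) ∧ x = ∑ i, c i • g i}

end

/-! A face `F` of `K` is cut out of `K` by its linear span, and the span is the zero set of a
positive semidefinite quadratic form `a ↦ aᵀ H a`. Since `⟨H, ∑ aᵢaᵢᵀ⟩ = ∑ aᵢᵀ H aᵢ` is a sum of
nonnegative terms, it vanishes exactly when every `aᵢ` lies in the span, i.e. in `F`; so `H`
exposes `CP(F)` in `CP(K)`. -/

section Face

variable {M : Type*} [AddCommGroup M] [Module ℝ M] {C F : Set M}

theorem IsFaceOf.zero_mem (hF : IsFaceOf C F) : (0 : M) ∈ F := by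
  obtain ⟨x, hx⟩ := hF.1
  simpa using hF.2.2.2.1 x hx 0 le_rfl

theorem IsFaceOf.add_mem (hF : IsFaceOf C F) {u v : M} (hu : u ∈ F) (hv : v ∈ F) :
    u + v ∈ F := by
  have hmid : (1 / 2 : ℝ) • u + (1 / 2 : ℝ) • v ∈ F :=
    hF.2.2.1 hu hv (by norm_num) (by norm_num) (by norm_num)
  convert hF.2.2.2.1 _ hmid 2 zero_le_two using 1
  module

theorem IsFaceOf.exists_sub_of_mem_span (hF : IsFaceOf C F) {x : M}
    (hx : x ∈ Submodule.span ℝ F) : ∃ u ∈ F, ∃ v ∈ F, x = u - v := by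
  have hcone := hF.2.2.2.1
  induction hx using Submodule.span_induction with
  | mem x hxF => exact ⟨x, hxF, 0, hF.zero_mem, (sub_zero x).symm⟩
  | zero => exact ⟨0, hF.zero_mem, 0, hF.zero_mem, (sub_zero 0).symm⟩
  | add x y _ _ ihx ihy =>
    obtain ⟨u₁, hu₁, v₁, hv₁, rfl⟩ := ihx
    obtain ⟨u₂, hu₂, v₂, hv₂, rfl⟩ := ihy
    exact ⟨u₁ + u₂, hF.add_mem hu₁ hu₂, v₁ + v₂, hF.add_mem hv₁ hv₂, by abel⟩
  | smul c x _ ih =>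
    obtain ⟨u, hu, v, hv, rfl⟩ := ih
    rcases le_total 0 c with hc | hc
    · exact ⟨c • u, hcone u hu c hc, c • v, hcone v hv c hc, smul_sub c u v⟩
    · have hc' : 0 ≤ -c := neg_nonneg.2 hc
      exact ⟨(-c) • v, hcone v hv _ hc', (-c) • u, hcone u hu _ hc', by module⟩

theorem IsFaceOf.mem_of_mem_span (hF : IsFaceOf C F) {x : M} (hxC : x ∈ C)
    (hx : x ∈ Submodule.span ℝ F) : x ∈ F := by
  obtain ⟨u, hu, v, hv, rfl⟩ := hF.exists_sub_of_mem_span hx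
  exact (hF.2.2.2.2 (u - v) hxC v (hF.2.1 hv) (by simpa using hu)).1

theorem IsFaceOf.sep_mem_span_eq (hF : IsFaceOf C F) :
    {x ∈ C | x ∈ Submodule.span ℝ F} = F :=
  Set.Subset.antisymm (fun _ hx => hF.mem_of_mem_span hx.1 hx.2)
    fun _ hx => ⟨hF.2.1 hx, Submodule.subset_span hx⟩

end Face

section Mip

variable {n : ℕ}

theorem mip_add_right (H A B : Matrix (Fin n) (Fin n) ℝ) :
    mip H (A + B) = mip H A + mip H B := by
  simp only [mip, Matrix.add_apply, mul_add, Finset.sum_add_distrib]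

theorem mip_sum_right {ι : Type*} (s : Finset ι) (H : Matrix (Fin n) (Fin n) ℝ)
    (A : ι → Matrix (Fin n) (Fin n) ℝ) :
    mip H (∑ k ∈ s, A k) = ∑ k ∈ s, mip H (A k) := by
  simp only [mip, Matrix.sum_apply, Finset.mul_sum]
  exact (Finset.sum_congr rfl fun _ _ => Finset.sum_comm).trans Finset.sum_comm

theorem mip_vecMulVec_self (H : Matrix (Fin n) (Fin n) ℝ) (a : Fin n → ℝ) :
    mip H (vecMulVec a a) = a ⬝ᵥ H *ᵥ a := by
  simp only [mip, vecMulVec_apply, dotProduct, mulVec, Finset.mul_sum]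
  exact Finset.sum_congr rfl fun _ _ => Finset.sum_congr rfl fun _ _ => by ring

theorem isExposedFaceOf_of_eq_sep {C G : Set (Matrix (Fin n) (Fin n) ℝ)}
    (H : Matrix (Fin n) (Fin n) ℝ) (hH : ∀ A ∈ C, 0 ≤ mip H A)
    (hG : G = {A ∈ C | mip H A = 0}) (hne : G.Nonempty) (hconv : Convex ℝ G)
    (hcone : ∀ A ∈ G, ∀ c : ℝ, 0 ≤ c → c • A ∈ G) : IsExposedFaceOf C G := by
  refine ⟨⟨hne, hG ▸ Set.sep_subset _ _, hconv, hcone, fun A hA B hB hAB => ?_⟩, H, hH, hG⟩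
  rw [hG] at hAB ⊢
  have hsum : mip H A + mip H B = 0 := mip_add_right H A B ▸ hAB.2
  have hA0 := hH A hA
  have hB0 := hH B hB
  exact ⟨⟨hA, by linarith⟩, ⟨hB, by linarith⟩⟩

end Mip

theorem Submodule.exists_quadForm_nonneg_and_eq_zero_iff {n : ℕ}
    (W : Submodule ℝ (Fin n → ℝ)) :
    ∃ H : Matrix (Fin n) (Fin n) ℝ, ∀ a, 0 ≤ a ⬝ᵥ H *ᵥ a ∧ (a ⬝ᵥ H *ᵥ a = 0 ↔ a ∈ W) := by
  -- `H = BᵀB` for a matrix `B` with kernel `W`, so that `aᵀ H a = ‖B a‖²`.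
  let L := (Module.finBasis ℝ ((Fin n → ℝ) ⧸ W)).equivFun.toLinearMap ∘ₗ W.mkQ
  have hL : LinearMap.ker L = W := by
    rw [LinearEquiv.ker_comp, Submodule.ker_mkQ]
  let B := LinearMap.toMatrix' L
  have hquad : ∀ a, a ⬝ᵥ (Bᵀ * B) *ᵥ a = L a ⬝ᵥ L a := by
    intro a
    rw [← mulVec_mulVec, dotProduct_mulVec, vecMul_transpose, LinearMap.toMatrix'_mulVec]
  refine ⟨Bᵀ * B, fun a => ⟨hquad a ▸ dotProduct_self_star_nonneg (L a), ?_⟩⟩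
  rw [hquad, dotProduct_self_eq_zero, ← LinearMap.mem_ker, hL]

section CP

variable {n : ℕ} {S : Set (Fin n → ℝ)}

theorem CPset_nonempty (hS : S.Nonempty) : (CPset S).Nonempty :=
  let ⟨x, hx⟩ := hS
  ⟨vecMulVec x x, 1, one_pos, fun _ => x, fun _ => hx, by simp⟩

theorem CPset_add_mem {A B : Matrix (Fin n) (Fin n) ℝ} (hA : A ∈ CPset S) (hB : B ∈ CPset S) :
    A + B ∈ CPset S := by
  obtain ⟨k, hk, f, hf, rfl⟩ := hA
  obtain ⟨l, -, g, hg, rfl⟩ := hB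
  refine ⟨k + l, by omega, Fin.append f g, Fin.addCases (by simpa using hf) (by simpa using hg),
    ?_⟩
  simp [Fin.sum_univ_add]

theorem CPset_smul_mem (hS : ∀ x ∈ S, ∀ c : ℝ, 0 ≤ c → c • x ∈ S)
    {A : Matrix (Fin n) (Fin n) ℝ} {c : ℝ} (hc : 0 ≤ c) (hA : A ∈ CPset S) :
    c • A ∈ CPset S := by
  obtain ⟨k, hk, f, hf, rfl⟩ := hA
  refine ⟨k, hk, fun i => √c • f i, fun i => hS _ (hf i) _ (Real.sqrt_nonneg c), ?_⟩
  simp only [Finset.smul_sum, smul_vecMulVec, vecMulVec_smul, smul_smul, Real.mul_self_sqrt hc]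

theorem convex_CPset (hS : ∀ x ∈ S, ∀ c : ℝ, 0 ≤ c → c • x ∈ S) : Convex ℝ (CPset S) :=
  fun _ hA _ hB _ _ ha hb _ => CPset_add_mem (CPset_smul_mem hS ha hA) (CPset_smul_mem hS hb hB)

theorem mip_sum_vecMulVec {k : ℕ} (H : Matrix (Fin n) (Fin n) ℝ) (f : Fin k → Fin n → ℝ) :
    mip H (∑ i, vecMulVec (f i) (f i)) = ∑ i, f i ⬝ᵥ H *ᵥ f i := by
  simp only [mip_sum_right, mip_vecMulVec_self]

theorem mip_nonneg_of_mem_CPset {H : Matrix (Fin n) (Fin n) ℝ} (hH : ∀ a ∈ S, 0 ≤ a ⬝ᵥ H *ᵥ a)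
    {A : Matrix (Fin n) (Fin n) ℝ} (hA : A ∈ CPset S) : 0 ≤ mip H A := by
  obtain ⟨k, -, f, hf, rfl⟩ := hA
  rw [mip_sum_vecMulVec]
  exact Finset.sum_nonneg fun i _ => hH _ (hf i)

theorem sep_mip_eq_zero_CPset {H : Matrix (Fin n) (Fin n) ℝ} (hH : ∀ a ∈ S, 0 ≤ a ⬝ᵥ H *ᵥ a) :
    {A ∈ CPset S | mip H A = 0} = CPset {a ∈ S | a ⬝ᵥ H *ᵥ a = 0} := by
  ext A
  constructor
  · rintro ⟨⟨k, hk, f, hf, rfl⟩, hzero⟩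
    rw [mip_sum_vecMulVec, Finset.sum_eq_zero_iff_of_nonneg fun i _ => hH _ (hf i)] at hzero
    exact ⟨k, hk, f, fun i => ⟨hf i, hzero i (Finset.mem_univ i)⟩, rfl⟩
  · rintro ⟨k, hk, f, hf, rfl⟩
    refine ⟨⟨k, hk, f, fun i => (hf i).1, rfl⟩, ?_⟩
    rw [mip_sum_vecMulVec]
    exact Finset.sum_eq_zero fun i _ => (hf i).2

end CP

theorem stmt3_general (n : ℕ) (K : Set (Fin n → ℝ))
    (F : Set (Fin n → ℝ)) (hF : IsFaceOf K F) :
    IsExposedFaceOf (CPset K) (CPset F) := by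
  have hcone := hF.2.2.2.1
  obtain ⟨H, hH⟩ := (Submodule.span ℝ F).exists_quadForm_nonneg_and_eq_zero_iff
  have hcut : {a ∈ K | a ⬝ᵥ H *ᵥ a = 0} = F := by
    simp only [(hH _).2, hF.sep_mem_span_eq]
  refine isExposedFaceOf_of_eq_sep H (fun A => mip_nonneg_of_mem_CPset fun a _ => (hH a).1) ?_
    (CPset_nonempty hF.1) (convex_CPset hcone) fun A hA c hc => CPset_smul_mem hcone hc hA
  rw [sep_mip_eq_zero_CPset fun a _ => (hH a).1, hcut]

/-- if `F` is a face of a closed convex cone `K ⊆ ℝⁿ`,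
then `CP(F)` is an exposed face of `CP(K)`. -/
theorem stmt3 (n : ℕ) (K : Set (Fin n → ℝ)) (hKcl : IsClosed K)
    (hKconv : Convex ℝ K)
    (hKcone : ∀ x ∈ K, ∀ c : ℝ, 0 ≤ c → c • x ∈ K)
    (F : Set (Fin n → ℝ)) (hF : IsFaceOf K F) :
    IsExposedFaceOf (CPset K) (CPset F) :=
  stmt3_general n K F hF
end

section
/- Let n ≥ 2 and let X be a linear subspace of ℝⁿ such that X ∩ int Lⁿ = ∅ and X ∩ Lⁿ ⊋ {0}. Then there exists x ∈ ∂Lⁿ \ {0} such that X ∩ Lⁿ = ℝ₊x; consequently CP(X ∩ Lⁿ) = ℝ₊·xxᵀ, which has dimension 1. -/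
open Matrix
open scoped Pointwise

/-!
Every point of `X ∩ Lⁿ` lies on `∂Lⁿ`, where `x₀ = ‖x̄‖` for the spatial part `x̄`. If `x, y` are
such points, so is `x + y`, whence `‖x̄ + ȳ‖ = ‖x̄‖ + ‖ȳ‖`; in a Euclidean space this puts `ȳ` on
the ray of `x̄`, and comparing first coordinates puts `y` on the ray of `x`. Finally, sums of
`(c x)(c x)ᵀ = c² xxᵀ` fill exactly the ray of `xxᵀ`.
-/

/-- The spatial part `(x₁, …, xₘ)` of `x`, as a vector of `EuclideanSpace` so that its norm is
the one in the definition of `soc`. -/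
def socTail {m : ℕ} (x : Fin (m+1) → ℝ) : EuclideanSpace ℝ (Fin m) :=
  WithLp.toLp 2 (Fin.tail x)

namespace socTail

variable {m : ℕ}

lemma add (x y : Fin (m+1) → ℝ) : socTail (x + y) = socTail x + socTail y := rfl

lemma smul (c : ℝ) (x : Fin (m+1) → ℝ) : socTail (c • x) = c • socTail x := rfl

lemma norm_eq (x : Fin (m+1) → ℝ) : ‖socTail x‖ = √(∑ i : Fin m, x i.succ ^ 2) := by
  simp [socTail, EuclideanSpace.norm_eq, Fin.tail, Real.norm_eq_abs, sq_abs]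

lemma ext_iff {x y : Fin (m+1) → ℝ} : x = y ↔ x 0 = y 0 ∧ socTail x = socTail y := by
  refine ⟨fun h => h ▸ ⟨rfl, rfl⟩, fun ⟨h0, ht⟩ => ?_⟩
  funext i
  refine Fin.cases h0 (fun j => ?_) i
  exact congrArg (fun v : EuclideanSpace ℝ (Fin m) => v j) ht

end socTail

section SecondOrderCone

variable {m : ℕ} {x y : Fin (m+1) → ℝ}

lemma mem_soc_iff : x ∈ soc m ↔ ‖socTail x‖ ≤ x 0 := by
  rw [socTail.norm_eq]; rfl

lemma mem_socBd_iff : x ∈ socBd m ↔ ‖socTail x‖ = x 0 := by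
  rw [socTail.norm_eq]; rfl

lemma inter_soc_subset_socBd {S : Set (Fin (m+1) → ℝ)} (hS : S ∩ socInt m = ∅) :
    S ∩ soc m ⊆ socBd m := fun y hy =>
  le_antisymm hy.2 <| not_lt.1 fun h => Set.eq_empty_iff_forall_notMem.1 hS y ⟨hy.1, h⟩

lemma add_mem_soc (hx : x ∈ soc m) (hy : y ∈ soc m) : x + y ∈ soc m := by
  rw [mem_soc_iff] at hx hy ⊢
  rw [socTail.add]
  exact (norm_add_le _ _).trans (add_le_add hx hy)

lemma smul_mem_soc {c : ℝ} (hc : 0 ≤ c) (hx : x ∈ soc m) : c • x ∈ soc m := by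
  rw [mem_soc_iff] at hx ⊢
  rw [socTail.smul, norm_smul, Real.norm_of_nonneg hc, Pi.smul_apply, smul_eq_mul]
  exact mul_le_mul_of_nonneg_left hx hc

/-- Equality in the triangle inequality forces the spatial parts of `x` and `y` onto one ray. -/
lemma mem_rayOf_of_add_mem_socBd (hx : x ∈ socBd m) (hx0 : x ≠ 0) (hy : y ∈ socBd m)
    (hxy : x + y ∈ socBd m) : y ∈ rayOf x := by
  rw [mem_socBd_iff] at hx hy hxy
  have hsame : SameRay ℝ (socTail x) (socTail y) := by
    rw [sameRay_iff_norm_add, ← socTail.add, hxy, hx, hy, Pi.add_apply]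
  have htx : socTail x ≠ 0 := fun h =>
    hx0 <| socTail.ext_iff.2 ⟨by simpa [h] using hx.symm, h⟩
  obtain ⟨c, hc, hyc⟩ := hsame.exists_nonneg_left htx
  refine ⟨c, hc, ?_⟩
  have hy0 : y 0 = c * x 0 := by
    rw [← hy, ← hx, ← hyc, norm_smul, Real.norm_of_nonneg hc]
  exact socTail.ext_iff.2 ⟨hy0, hyc.symm⟩

lemma inter_soc_eq_rayOf {X : Submodule ℝ (Fin (m+1) → ℝ)}
    (hX : (X : Set (Fin (m+1) → ℝ)) ∩ socInt m = ∅) (hx : x ∈ (X : Set (Fin (m+1) → ℝ)) ∩ soc m)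
    (hx0 : x ≠ 0) : (X : Set (Fin (m+1) → ℝ)) ∩ soc m = rayOf x := by
  have hbd := inter_soc_subset_socBd hX
  ext y
  constructor
  · intro hy
    exact mem_rayOf_of_add_mem_socBd (hbd hx) hx0 (hbd hy)
      (hbd ⟨X.add_mem hx.1 hy.1, add_mem_soc hx.2 hy.2⟩)
  · rintro ⟨c, hc, rfl⟩
    exact ⟨X.smul_mem c hx.1, smul_mem_soc hc hx.2⟩

end SecondOrderCone

lemma vecMulVec_smul_self {n : ℕ} (c : ℝ) (x : Fin n → ℝ) :
    vecMulVec (c • x) (c • x) = (c * c) • vecMulVec x x := by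
  rw [smul_vecMulVec, vecMulVec_smul, smul_smul]

lemma CPset_rayOf {n : ℕ} (x : Fin n → ℝ) : CPset (rayOf x) = rayOf (vecMulVec x x) := by
  ext A
  constructor
  · rintro ⟨k, -, f, hf, rfl⟩
    choose c hc hfc using hf
    refine ⟨∑ i, c i * c i, Finset.sum_nonneg fun i _ => mul_nonneg (hc i) (hc i), ?_⟩
    simp only [hfc, vecMulVec_smul_self, Finset.sum_smul]
  · rintro ⟨c, hc, rfl⟩
    refine ⟨1, one_pos, fun _ => √c • x, fun _ => ⟨√c, Real.sqrt_nonneg c, rfl⟩, ?_⟩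
    rw [Fin.sum_univ_one, vecMulVec_smul_self, Real.mul_self_sqrt hc]

lemma span_rayOf {M : Type*} [AddCommGroup M] [Module ℝ M] (x : M) :
    Submodule.span ℝ (rayOf x) = ℝ ∙ x := by
  refine le_antisymm (Submodule.span_le.2 ?_) (Submodule.span_le.2 ?_)
  · rintro _ ⟨c, -, rfl⟩
    exact Submodule.smul_mem _ c (Submodule.mem_span_singleton_self x)
  · exact Set.singleton_subset_iff.2 <|
      Submodule.subset_span ⟨1, zero_le_one, (one_smul ℝ x).symm⟩

lemma setDim_rayOf {M : Type*} [AddCommGroup M] [Module ℝ M] {x : M} (hx : x ≠ 0) :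
    setDim (rayOf x) = 1 := by
  rw [setDim, span_rayOf, finrank_span_singleton hx]

theorem stmt13_general (m : ℕ) (X : Submodule ℝ (Fin (m+1) → ℝ))
    (h1 : (X : Set (Fin (m+1) → ℝ)) ∩ socInt m = ∅)
    (h2 : ({0} : Set (Fin (m+1) → ℝ)) ⊂ (X : Set (Fin (m+1) → ℝ)) ∩ soc m) :
    ∃ x : Fin (m+1) → ℝ, x ∈ socBd m ∧ x ≠ 0 ∧
      (X : Set (Fin (m+1) → ℝ)) ∩ soc m = rayOf x ∧
      CPset ((X : Set (Fin (m+1) → ℝ)) ∩ soc m) = rayOf (Matrix.vecMulVec x x) ∧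
      setDim (CPset ((X : Set (Fin (m+1) → ℝ)) ∩ soc m)) = 1 := by
  obtain ⟨x, hx, hx0⟩ := Set.exists_of_ssubset h2
  have hx0 : x ≠ 0 := hx0
  have hray := inter_soc_eq_rayOf h1 hx hx0
  refine ⟨x, inter_soc_subset_socBd h1 hx, hx0, hray, ?_, ?_⟩
  · rw [hray, CPset_rayOf]
  · rw [hray, CPset_rayOf, setDim_rayOf (vecMulVec_ne_zero hx0 hx0)]

/-- if a subspace `X` misses `int Lⁿ` but `X ∩ Lⁿ ⊋ {0}`, then
`X ∩ Lⁿ = ℝ₊x` for some `x ∈ ∂Lⁿ \ {0}`, so `CP(X ∩ Lⁿ) = ℝ₊ xxᵀ` has dimension 1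
(here `n = m + 1 ≥ 2`). -/
theorem stmt13 (m : ℕ) (hm : 1 ≤ m) (X : Submodule ℝ (Fin (m+1) → ℝ))
    (h1 : (X : Set (Fin (m+1) → ℝ)) ∩ socInt m = ∅)
    (h2 : ({0} : Set (Fin (m+1) → ℝ)) ⊂ (X : Set (Fin (m+1) → ℝ)) ∩ soc m) :
    ∃ x : Fin (m+1) → ℝ, x ∈ socBd m ∧ x ≠ 0 ∧
      (X : Set (Fin (m+1) → ℝ)) ∩ soc m = rayOf x ∧
      CPset ((X : Set (Fin (m+1) → ℝ)) ∩ soc m) = rayOf (Matrix.vecMulVec x x) ∧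
      setDim (CPset ((X : Set (Fin (m+1) → ℝ)) ∩ soc m)) = 1 :=
  stmt13_general m X h1 h2
end
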